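/- arXiv:1711.01811 — 2 statements merged into one kernel-verified Lean document; each statement's English description precedes it below -/
import Mathlib

section
/- Let P be a finite set of at least two points in the plane ℝ². Then the point visibility graph of P is either isomorphic to a path graph, or it has diameter at most two, i.e., every pair of distinct non-adjacent vertices has a common neighbor. -/
/-!
If `P` is collinear, a linear functional that is injective on the line through `P` carries the
points of `P` to reals without changing which points lie between which, so the visibility graph
of `P` is the Hasse diagram of a finite chain of reals, i.e. a path.

If `P` is not collinear, fix two points `u, v`, an affine functional `g` vanishing at `u` and `v`
but not on all of `P`, and a point `w` of `P` minimising `|g|` among the points of `P` where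
`g ≠ 0`. On the open segments from `u` and from `v` to `w`, `g` takes values strictly between
`0` and `g w`, so no point of `P` lies on them and `w` is a common neighbour of `u` and `v`.
-/

/-- Two points `p q` are visible to each other with respect to the point set `P`
if they are distinct and no point of `P` lies in the open segment between them. -/
def Visible (P : Finset (ℝ × ℝ)) (p q : ℝ × ℝ) : Prop :=
  p ≠ q ∧ ∀ r ∈ P, r ∉ openSegment ℝ p q

/-- The point visibility graph of a finite point set `P` in the plane. -/
def PVG (P : Finset (ℝ × ℝ)) : SimpleGraph {x : ℝ × ℝ // x ∈ P} where
  Adj u v := Visible P u.1 v.1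
  symm := by
    constructor
    rintro u v ⟨hne, h⟩
    exact ⟨hne.symm, fun r hr hmem => h r hr (by rwa [openSegment_symm] at hmem)⟩
  loopless := by constructor; rintro u ⟨hne, -⟩; exact hne rfl

open SimpleGraph Set

section Field

variable {𝕜 E : Type*} [Field 𝕜] [AddCommGroup E] [Module 𝕜 E]

theorem Collinear.exists_linearMap_injOn {s : Set E} (h : Collinear 𝕜 s) :
    ∃ (f : E →ₗ[𝕜] 𝕜) (L : AffineSubspace 𝕜 E), s ⊆ L ∧ InjOn f L := by
  obtain ⟨p₀, v, hv⟩ := (collinear_iff_exists_forall_eq_smul_vadd s).1 h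
  obtain ⟨f, hf⟩ : ∃ f : E →ₗ[𝕜] 𝕜, f v = 0 → v = 0 := by
    by_cases hv0 : v = 0
    · exact ⟨0, fun _ => hv0⟩
    · obtain ⟨f, hf⟩ := Module.Projective.exists_dual_ne_zero 𝕜 hv0
      exact ⟨f, fun h => absurd h hf⟩
  refine ⟨f, AffineSubspace.mk' p₀ (𝕜 ∙ v), fun p hp => ?_, fun x hx y hy hxy => ?_⟩
  · obtain ⟨r, rfl⟩ := hv p hp
    simp [AffineSubspace.mem_mk', Submodule.mem_span_singleton]
  · have hdir := AffineSubspace.vsub_mem_direction hx hy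
    rw [AffineSubspace.direction_mk', Submodule.mem_span_singleton] at hdir
    obtain ⟨t, ht⟩ := hdir
    have : t * f v = 0 := by
      rw [← smul_eq_mul, ← map_smul, ht, vsub_eq_sub, map_sub, hxy, sub_self]
    rcases mul_eq_zero.1 this with rfl | hfv
    · simpa [sub_eq_zero, eq_comm] using ht
    · simpa [hf hfv, sub_eq_zero, eq_comm] using ht

theorem exists_affineMap_ne_zero_of_not_collinear {s : Set E} (hs : ¬ Collinear 𝕜 s) (u v : E) :
    ∃ g : E →ᵃ[𝕜] 𝕜, g u = 0 ∧ g v = 0 ∧ ∃ w ∈ s, g w ≠ 0 := by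
  obtain ⟨w, hws, hw⟩ : ∃ w ∈ s, w ∉ line[𝕜, u, v] := by
    by_contra! h
    refine hs ((collinear_iff_exists_forall_eq_smul_vadd s).2 ⟨u, v -ᵥ u, fun p hp => ?_⟩)
    obtain ⟨r, hr⟩ := mem_affineSpan_pair_iff_exists_lineMap_eq.1 (h p hp)
    exact ⟨r, by rw [← hr, AffineMap.lineMap_apply]⟩
  rw [← AffineSubspace.vsub_right_mem_direction_iff_mem (left_mem_affineSpan_pair 𝕜 u v)] at hw
  obtain ⟨φ, hφw, hφL⟩ := Submodule.exists_dual_map_eq_bot_of_notMem hw inferInstance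
  refine ⟨φ.toAffineMap - AffineMap.const 𝕜 E (φ u), by simp, ?_, w, hws, ?_⟩
  · have := Submodule.mem_map_of_mem (f := φ) (AffineSubspace.vsub_mem_direction
      (right_mem_affineSpan_pair 𝕜 u v) (left_mem_affineSpan_pair 𝕜 u v))
    simpa [hφL, sub_eq_zero] using this
  · simpa [sub_eq_zero] using hφw

end Field

section LinearOrderedField

variable {𝕜 E F : Type*} [Field 𝕜] [LinearOrder 𝕜] [IsStrictOrderedRing 𝕜]
  [AddCommGroup E] [Module 𝕜 E] [AddCommGroup F] [Module 𝕜 F]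

theorem hasse_adj_iff_forall_notMem_openSegment {s : Set 𝕜} {x y : s} :
    (hasse s).Adj x y ↔ x ≠ y ∧ ∀ z ∈ s, z ∉ openSegment 𝕜 (x : 𝕜) y := by
  have hcov {a b : s} (hab : a < b) : a ⋖ b ↔ ∀ z ∈ s, z ∉ Ioo (a : 𝕜) b := by
    rw [← not_iff_not, not_covBy_iff hab]
    push Not
    exact ⟨fun ⟨c, hac, hcb⟩ => ⟨c, c.2, hac, hcb⟩,
      fun ⟨z, hz, haz, hzb⟩ => ⟨⟨z, hz⟩, haz, hzb⟩⟩
  rw [hasse_adj]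
  rcases lt_trichotomy x y with h | rfl | h
  · rw [openSegment_eq_Ioo (Subtype.coe_lt_coe.2 h), ← hcov h]
    simpa [h.ne] using fun hyx => (h.asymm hyx.lt).elim
  · simp
  · rw [openSegment_symm, openSegment_eq_Ioo (Subtype.coe_lt_coe.2 h), ← hcov h]
    simpa [h.ne'] using fun hxy => (h.asymm hxy.lt).elim

theorem mem_openSegment_iff_of_injOn (f : E →ᵃ[𝕜] F) {L : Set E} (hL : Convex 𝕜 L)
    (hf : InjOn f L) {p q r : E} (hp : p ∈ L) (hq : q ∈ L) (hr : r ∈ L) :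
    r ∈ openSegment 𝕜 p q ↔ f r ∈ openSegment 𝕜 (f p) (f q) := by
  rw [← image_openSegment]
  refine ⟨mem_image_of_mem f, ?_⟩
  rintro ⟨x, hx, hfx⟩
  rwa [← hf (hL.openSegment_subset hp hq hx) hr hfx]

theorem notMem_openSegment_of_abs_le {s : Set E} (g : E →ᵃ[𝕜] 𝕜) {u w : E} (hu : g u = 0)
    (hw : g w ≠ 0) (hmin : ∀ r ∈ s, g r ≠ 0 → |g w| ≤ |g r|) :
    ∀ r ∈ s, r ∉ openSegment 𝕜 u w := by
  intro r hr hrs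
  have hgr : g r ∈ openSegment 𝕜 0 (g w) :=
    hu ▸ image_openSegment 𝕜 g u w ▸ mem_image_of_mem g hrs
  rw [openSegment_eq_image'] at hgr
  obtain ⟨t, ⟨ht0, ht1⟩, hgr⟩ := hgr
  simp only [zero_add, sub_zero, smul_eq_mul] at hgr
  have hle := hmin r hr (by rw [← hgr]; positivity)
  rw [← hgr, abs_mul, abs_of_pos ht0] at hle
  nlinarith [abs_pos.2 hw]

end LinearOrderedField

def OrderIso.hasseIso {α β : Type*} [Preorder α] [Preorder β] (e : α ≃o β) :
    hasse α ≃g hasse β :=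
  ⟨e.toEquiv, by simp [hasse_adj, apply_covBy_apply_iff]⟩

theorem nonempty_pvg_iso_pathGraph_of_injOn (P : Finset (ℝ × ℝ)) (f : ℝ × ℝ → ℝ)
    (hf : InjOn f P) (hseg : ∀ p ∈ P, ∀ q ∈ P, ∀ r ∈ P,
      r ∈ openSegment ℝ p q ↔ f r ∈ openSegment ℝ (f p) (f q)) :
    Nonempty (PVG P ≃g pathGraph P.card) := by
  classical
  set T := P.image f
  let e : {x // x ∈ P} ≃ {y // y ∈ T} :=
    Set.BijOn.equiv f (by rw [Finset.coe_image]; exact hf.bijOn_image)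
  have hadj (p q : {x // x ∈ P}) : (hasse T).Adj (e p) (e q) ↔ (PVG P).Adj p q := by
    refine (hasse_adj_iff_forall_notMem_openSegment (s := (T : Set ℝ))).trans ?_
    show _ ↔ Visible P p q
    have hep (x : {x // x ∈ P}) : (e x : ℝ) = f x := rfl
    rw [Visible, hep, hep, Ne, Subtype.ext_iff, hep, hep, hf.eq_iff p.2 q.2,
    Finset.coe_image, Set.forall_mem_image]
    exact and_congr_right fun _ => forall₂_congr fun r hr => (hseg p p.2 q q.2 r hr).not.symm
  exact ⟨(⟨e, hadj _ _⟩ : PVG P ≃g hasse T).trans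
    (T.orderIsoOfFin (Finset.card_image_of_injOn hf)).symm.hasseIso⟩

theorem Collinear.nonempty_pvg_iso_pathGraph {P : Finset (ℝ × ℝ)}
    (hP : Collinear ℝ (P : Set (ℝ × ℝ))) : Nonempty (PVG P ≃g pathGraph P.card) := by
  obtain ⟨f, L, hPL, hf⟩ := hP.exists_linearMap_injOn
  exact nonempty_pvg_iso_pathGraph_of_injOn P f (hf.mono hPL) fun p hp q hq r hr =>
    mem_openSegment_iff_of_injOn f.toAffineMap L.convex hf (hPL hp) (hPL hq) (hPL hr)

theorem exists_pvg_adj_adj_of_not_collinear {P : Finset (ℝ × ℝ)}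
    (hP : ¬ Collinear ℝ (P : Set (ℝ × ℝ))) (u v : {x // x ∈ P}) :
    ∃ w, (PVG P).Adj u w ∧ (PVG P).Adj v w := by
  classical
  obtain ⟨g, hgu, hgv, w₀, hw₀P, hw₀⟩ := exists_affineMap_ne_zero_of_not_collinear hP u v
  obtain ⟨w, hw, hmin⟩ := Finset.exists_min_image (P.filter (g · ≠ 0)) (|g ·|)
    ⟨w₀, Finset.mem_filter.2 ⟨hw₀P, hw₀⟩⟩
  rw [Finset.mem_filter] at hw
  have visible {x : ℝ × ℝ} (hx : g x = 0) : Visible P x w :=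
    ⟨fun hxw => hw.2 (hxw ▸ hx), notMem_openSegment_of_abs_le g hx hw.2
      fun r hr hgr => hmin r (Finset.mem_filter.2 ⟨hr, hgr⟩)⟩
  exact ⟨⟨w, hw.1⟩, visible hgu, visible hgv⟩

theorem stmt_1_general (P : Finset (ℝ × ℝ)) :
    (∃ n : ℕ, Nonempty ((PVG P) ≃g SimpleGraph.pathGraph n)) ∨
      (∀ u v : {x : ℝ × ℝ // x ∈ P}, u ≠ v → ¬ (PVG P).Adj u v →
        ∃ w, (PVG P).Adj u w ∧ (PVG P).Adj v w) := by
  by_cases hP : Collinear ℝ (P : Set (ℝ × ℝ))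
  · exact Or.inl ⟨_, hP.nonempty_pvg_iso_pathGraph⟩
  · exact Or.inr fun u v _ _ => exists_pvg_adj_adj_of_not_collinear hP u v

theorem stmt_1 (P : Finset (ℝ × ℝ)) (hcard : 2 ≤ P.card) :
    (∃ n : ℕ, Nonempty ((PVG P) ≃g SimpleGraph.pathGraph n)) ∨
      (∀ u v : {x : ℝ × ℝ // x ∈ P}, u ≠ v → ¬ (PVG P).Adj u v →
        ∃ w, (PVG P).Adj u w ∧ (PVG P).Adj v w) :=
  stmt_1_general P
end

section
/- Let G = (V, E) be a finite simple graph, let k ∈ ℕ, and let B be the set of blockers of Φ(G). Then there exists a set S ⊆ V with |S| ≤ k such that the graph G − S obtained by deleting the vertices of S from G is acyclic, if and only if there exists a set S′ of vertices of Φ(G) with |S′| ≤ k + |B| such that Φ(G) − S′ is acyclic. -/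
/-- The blockers of `Φ(G)`: one new vertex for each unordered pair of distinct
non-adjacent vertices of `G`. -/
def Blocker {V : Type} (G : SimpleGraph V) : Type :=
  {e : Sym2 V // ¬ e.IsDiag ∧ e ∉ G.edgeSet}

/-- The transformation `Φ`: the graph on `V ⊕ B` containing all edges of `G`,
in which every blocker is adjacent to all other vertices. -/
def Phi {V : Type} (G : SimpleGraph V) : SimpleGraph (V ⊕ Blocker G) :=
  SimpleGraph.fromRel (fun x y =>
    match x, y with
    | Sum.inl u, Sum.inl v => G.Adj u v
    | _, _ => True)

/-! Deleting every blocker turns `Φ(G)` back into `G`, which gives the forward direction.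
Conversely, let a blocker `b` survive in an acyclic `Φ(G) − S'`. Since `b` is adjacent to
everything, any other surviving edge closes a triangle with `b`: the surviving vertices of `G`
are independent, at most one other blocker survives if some vertex of `G` does, and at most two
blockers survive otherwise. An independent set plus one vertex spans a subgraph of a star, so
trading the surviving blockers for vertices of `G` stays within the budget `k`. -/

namespace SimpleGraph

variable {α : Type*} {H : SimpleGraph α}

theorem IsAcyclic.not_adj_of_adj_of_adj (hH : H.IsAcyclic) {a b c : α} (hab : H.Adj a b)
    (hbc : H.Adj b c) : ¬ H.Adj c a := by
  classical
  intro hca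
  exact hH.cliqueFree le_rfl {a, b, c} (is3Clique_triple_iff.mpr ⟨hab, hca.symm, hbc⟩)

theorem isAcyclic_of_forall_adj (r : α) (h : ∀ x y, H.Adj x y → x = r ∨ y = r) :
    H.IsAcyclic :=
  (isAcyclic_starGraph r).anti fun x y hxy => starGraph_adj.mpr ⟨hxy.ne, h x y hxy⟩

theorem IsIndepSet.isAcyclic_induce {I : Set α} (hI : H.IsIndepSet I) : (H.induce I).IsAcyclic :=
  isAcyclic_bot.anti fun x y hxy => hI x.2 y.2 (Subtype.coe_ne_coe.mpr hxy.ne) hxy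

theorem IsIndepSet.isAcyclic_induce_insert {I : Set α} (hI : H.IsIndepSet I) (w : α) :
    (H.induce (insert w I)).IsAcyclic := by
  refine isAcyclic_of_forall_adj ⟨w, Set.mem_insert w I⟩ fun ⟨x, hx⟩ ⟨y, hy⟩ hxy => ?_
  simp only [Subtype.mk.injEq]
  by_contra! hne
  exact hI (hx.resolve_left hne.1) (hy.resolve_left hne.2) (fun h => hxy.ne (Subtype.ext h))
    hxy

theorem IsIndepSet.exists_isAcyclic_induce_compl [Finite α] {I : Set α} {k : ℕ}
    (hI : H.IsIndepSet I) (hk : Iᶜ.ncard ≤ k + 1) :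
    ∃ S : Set α, S.ncard ≤ k ∧ (H.induce Sᶜ).IsAcyclic := by
  rcases Iᶜ.eq_empty_or_nonempty with hI' | ⟨w, hw⟩
  · exact ⟨Iᶜ, by simp [hI'], by rw [compl_compl]; exact hI.isAcyclic_induce⟩
  · refine ⟨Iᶜ \ {w}, by rw [Set.ncard_sdiff_singleton_of_mem hw]; omega, ?_⟩
    rw [Set.compl_sdiff, compl_compl, Set.singleton_union]
    exact hI.isAcyclic_induce_insert w

end SimpleGraph

theorem Set.ncard_eq_ncard_preimage_inl_add_ncard_preimage_inr {α β : Type*} [Finite α]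
    [Finite β] (s : Set (α ⊕ β)) :
    s.ncard = (Sum.inl ⁻¹' s).ncard + (Sum.inr ⁻¹' s).ncard := by
  conv_lhs => rw [← Set.image_preimage_inl_union_image_preimage_inr s]
  rw [Set.ncard_union_eq Set.disjoint_image_inl_image_inr,
    Set.ncard_image_of_injective _ Sum.inl_injective,
    Set.ncard_image_of_injective _ Sum.inr_injective]

open SimpleGraph

section Phi

variable {V : Type} {G : SimpleGraph V}

instance [Finite V] : Finite (Blocker G) :=
  inferInstanceAs (Finite {e : Sym2 V // ¬ e.IsDiag ∧ e ∉ G.edgeSet})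

theorem phi_adj_inl_inl {u v : V} : (Phi G).Adj (Sum.inl u) (Sum.inl v) ↔ G.Adj u v := by
  simp only [Phi, fromRel_adj, ne_eq, Sum.inl.injEq]
  exact ⟨fun ⟨_, h⟩ => h.elim id fun h => h.symm, fun h => ⟨h.ne, .inl h⟩⟩

theorem phi_adj_inr {x : V ⊕ Blocker G} {b : Blocker G} :
    (Phi G).Adj x (Sum.inr b) ↔ x ≠ Sum.inr b := by
  cases x <;> simp [Phi]

variable (G) in
noncomputable def phiInduceImageInlIso (K : Set V) :
    G.induce K ≃g (Phi G).induce (Sum.inl '' K) where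
  toEquiv := Equiv.Set.image Sum.inl K Sum.inl_injective
  map_rel_iff' := phi_adj_inl_inl

theorem isAcyclic_phi_induce_compl {S : Set V} (hS : (G.induce Sᶜ).IsAcyclic) :
    ((Phi G).induce (Sum.inl '' S ∪ Set.range Sum.inr)ᶜ).IsAcyclic := by
  have : (Sum.inl '' S ∪ Set.range (Sum.inr : Blocker G → _))ᶜ = Sum.inl '' Sᶜ := by
    ext (_ | _) <;> simp
  rw [this]
  exact (phiInduceImageInlIso G Sᶜ).isAcyclic_iff.mp hS

variable {X : Set (V ⊕ Blocker G)}

theorem SimpleGraph.IsAcyclic.induce_preimage_inl (hX : ((Phi G).induce X).IsAcyclic) :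
    (G.induce (Sum.inl ⁻¹' X)).IsAcyclic :=
  (hX.embedding ((Phi G).induceHomOfLE (Set.image_preimage_subset Sum.inl X))).embedding
    (phiInduceImageInlIso G _).toEmbedding

theorem SimpleGraph.IsAcyclic.not_adj_of_inr_mem (hX : ((Phi G).induce X).IsAcyclic)
    {b : Blocker G} (hb : Sum.inr b ∈ X) {x y : V ⊕ Blocker G} (hx : x ∈ X) (hy : y ∈ X)
    (hxb : x ≠ Sum.inr b) (hyb : y ≠ Sum.inr b) : ¬ (Phi G).Adj x y := fun hxy =>
  hX.not_adj_of_adj_of_adj (a := ⟨x, hx⟩) (b := ⟨y, hy⟩) (c := ⟨Sum.inr b, hb⟩) hxy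
    (phi_adj_inr.mpr hyb) (phi_adj_inr.mpr hxb).symm

theorem SimpleGraph.IsAcyclic.isIndepSet_preimage_inl (hX : ((Phi G).induce X).IsAcyclic)
    {b : Blocker G} (hb : Sum.inr b ∈ X) : G.IsIndepSet (Sum.inl ⁻¹' X) :=
  fun _ hu _ hv _ huv =>
    hX.not_adj_of_inr_mem hb hu hv Sum.inl_ne_inr Sum.inl_ne_inr (phi_adj_inl_inl.mpr huv)

theorem SimpleGraph.IsAcyclic.ncard_preimage_inr_le_one [Finite V]
    (hX : ((Phi G).induce X).IsAcyclic) {v : V} (hv : Sum.inl v ∈ X) :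
    (Sum.inr ⁻¹' X).ncard ≤ 1 := by
  rw [Set.ncard_le_one]
  intro a ha b hb
  by_contra hab
  exact hX.not_adj_of_inr_mem hb hv ha Sum.inl_ne_inr (by simpa using hab)
    (phi_adj_inr.mpr Sum.inl_ne_inr)

theorem SimpleGraph.IsAcyclic.ncard_preimage_inr_le_two [Finite V]
    (hX : ((Phi G).induce X).IsAcyclic) : (Sum.inr ⁻¹' X).ncard ≤ 2 := by
  by_contra! h
  obtain ⟨a, ha, b, hb, c, hc, hab, hac, hbc⟩ := (Set.two_lt_ncard).mp h
  exact hX.not_adj_of_inr_mem hc ha hb (by simpa using hac) (by simpa using hbc)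
    (phi_adj_inr.mpr (by simpa using hab))

theorem exists_isAcyclic_induce_compl_of_phi [Finite V] {k : ℕ} {S' : Set (V ⊕ Blocker G)}
    (hS' : S'.ncard ≤ k + Nat.card (Blocker G)) (hac : ((Phi G).induce S'ᶜ).IsAcyclic) :
    ∃ S : Set V, S.ncard ≤ k ∧ (G.induce Sᶜ).IsAcyclic := by
  have hcard : (Sum.inl ⁻¹' S').ncard ≤ k + (Sum.inr ⁻¹' S'ᶜ).ncard := by
    have := (Sum.inr ⁻¹' S').ncard_add_ncard_compl
    rw [Set.ncard_eq_ncard_preimage_inl_add_ncard_preimage_inr] at hS'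
    rw [Set.preimage_compl]
    omega
  rcases (Sum.inr ⁻¹' S'ᶜ).eq_empty_or_nonempty with hR | ⟨b, hb⟩
  · refine ⟨Sum.inl ⁻¹' S', by simpa [hR] using hcard, ?_⟩
    rw [← Set.preimage_compl]
    exact hac.induce_preimage_inl
  rcases (Sum.inl ⁻¹' S'ᶜ).eq_empty_or_nonempty with hW | ⟨v, hv⟩
  · -- `V` is nonempty because the blocker `b` is a pair of vertices.
    obtain ⟨⟨v, -⟩, -⟩ := Quot.exists_rep b.1
    refine IsIndepSet.exists_isAcyclic_induce_compl (Set.pairwise_singleton v _) ?_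
    have := hac.ncard_preimage_inr_le_two
    rw [Set.preimage_compl, Set.compl_empty_iff] at hW
    rw [hW, Set.ncard_univ] at hcard
    rw [Set.ncard_compl, Set.ncard_singleton]
    omega
  · refine (hac.isIndepSet_preimage_inl hb).exists_isAcyclic_induce_compl ?_
    have := hac.ncard_preimage_inr_le_one hv
    rw [← Set.preimage_compl, compl_compl]
    omega

end Phi

theorem stmt_9 {V : Type} [Fintype V] (G : SimpleGraph V) (k : ℕ) :
    (∃ S : Set V, S.ncard ≤ k ∧ (G.induce Sᶜ).IsAcyclic) ↔
      (∃ S' : Set (V ⊕ Blocker G),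
        S'.ncard ≤ k + Nat.card (Blocker G) ∧ ((Phi G).induce S'ᶜ).IsAcyclic) := by
  constructor
  · rintro ⟨S, hSk, hS⟩
    refine ⟨Sum.inl '' S ∪ Set.range Sum.inr, ?_, isAcyclic_phi_induce_compl hS⟩
    rw [Set.ncard_eq_ncard_preimage_inl_add_ncard_preimage_inr]
    simpa [Set.preimage_image_eq _ Sum.inl_injective] using hSk
  · rintro ⟨S', hS'k, hS'⟩
    exact exists_isAcyclic_induce_compl_of_phi hS'k hS'
end
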